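/- Let m be a positive integer, F_1, …, F_6 : BitVec m → BitVec m, K_1, …, K_6, C : BitVec m, and let (L_1, R_1) be a plaintext satisfying F_1(L_1) ⊕ R_1 = C, with 6-round Feistel-2* ciphertext (L_7, R_7). Then the subkey K_1 is determined from the ciphertext and the subkeys K_3, K_4, K_5, K_6 by K_1 = C ⊕ L_4 ⊕ F_3(R_4) ⊕ K_3, where L_4 = R_7 ⊕ F_5(L_7 ⊕ F_6(R_7) ⊕ K_6) ⊕ K_5 and R_4 = L_7 ⊕ F_6(R_7) ⊕ K_6 ⊕ F_4(L_4) ⊕ K_4 (i.e., the third-round right half computed from the ciphertext equals C ⊕ K_1). -/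

import Mathlib

private lemma bv_lc {m : ℕ} (a b c : BitVec m) :
    a ^^^ (b ^^^ c) = b ^^^ (a ^^^ c) := by
  rw [← BitVec.xor_assoc, ← BitVec.xor_assoc, BitVec.xor_comm a b]

private lemma bv_cancel2 {m : ℕ} (x a b : BitVec m) :
    x ^^^ a ^^^ b ^^^ a ^^^ b = x := by
  simp [BitVec.xor_assoc, bv_lc]

private lemma bv_cancel2' {m : ℕ} (c x a b : BitVec m) :
    c ^^^ (x ^^^ a ^^^ b) ^^^ a ^^^ b = c ^^^ x := by
  simp [BitVec.xor_assoc, bv_lc]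

private lemma bv_final {m : ℕ} (a b k : BitVec m) :
    (a ^^^ b) ^^^ (b ^^^ a ^^^ k) = k := by
  simp [BitVec.xor_assoc, bv_lc]

/-- For a plaintext satisfying `F₁(L₁) ⊕ R₁ = C` with
6-round Feistel-2* ciphertext `(L₇, R₇)`, the subkey `K₁` is determined from
the ciphertext and `K₃, K₄, K₅, K₆` by `K₁ = C ⊕ L₄ ⊕ F₃(R₄) ⊕ K₃`, where
`L₄ = R₇ ⊕ F₅(L₇ ⊕ F₆(R₇) ⊕ K₆) ⊕ K₅` and
`R₄ = L₇ ⊕ F₆(R₇) ⊕ K₆ ⊕ F₄(L₄) ⊕ K₄` (the third-round right half computed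
from the ciphertext equals `C ⊕ K₁`). -/
theorem feistel2star_K1_determined (m : ℕ) (hm : 0 < m)
    (F1 F2 F3 F4 F5 F6 : BitVec m → BitVec m)
    (K1 K2 K3 K4 K5 K6 C : BitVec m)
    (L1 R1 L2 R2 L3 R3 L4 R4 L5 R5 L6 R6 L7 R7 : BitVec m)
    (hcond : F1 L1 ^^^ R1 = C)
    (h1 : (L2, R2) = (R1 ^^^ F1 L1 ^^^ K1, L1))
    (h2 : (L3, R3) = (R2 ^^^ F2 L2 ^^^ K2, L2))
    (h3 : (L4, R4) = (R3 ^^^ F3 L3 ^^^ K3, L3))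
    (h4 : (L5, R5) = (R4 ^^^ F4 L4 ^^^ K4, L4))
    (h5 : (L6, R6) = (R5 ^^^ F5 L5 ^^^ K5, L5))
    (h6 : (L7, R7) = (R6 ^^^ F6 L6 ^^^ K6, L6))
    (A B : BitVec m)
    (hA : A = R7 ^^^ F5 (L7 ^^^ F6 R7 ^^^ K6) ^^^ K5)
    (hB : B = L7 ^^^ F6 R7 ^^^ K6 ^^^ F4 A ^^^ K4) :
    K1 = C ^^^ A ^^^ F3 B ^^^ K3 := by
  obtain ⟨h1a, h1b⟩ := Prod.mk.injEq .. ▸ h1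
  obtain ⟨h2a, h2b⟩ := Prod.mk.injEq .. ▸ h2
  obtain ⟨h3a, h3b⟩ := Prod.mk.injEq .. ▸ h3
  obtain ⟨h4a, h4b⟩ := Prod.mk.injEq .. ▸ h4
  obtain ⟨h5a, h5b⟩ := Prod.mk.injEq .. ▸ h5
  obtain ⟨h6a, h6b⟩ := Prod.mk.injEq .. ▸ h6
  have e6 : L7 ^^^ F6 R7 ^^^ K6 = R6 := by rw [h6a, h6b, bv_cancel2]
  have eA : A = L4 := by rw [hA, e6, h5b, h6b, h5a, bv_cancel2, h4b]
  have eB : B = L3 := by rw [hB, e6, h5b, eA, h4a, bv_cancel2, h3b]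
  rw [eA, eB, h3a, bv_cancel2', h2b, h1a, ← hcond, bv_final]
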